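/- Let $d\ge 1$ and $\lambda>0$. There exist constants $c>0$ and $C>0$ such that for all integers $n\ge 2$, all $t>0$ and all $x\in Q$: $\int_Q |(G_d)^n(t,x,y)|\, dy \le C\,\bigl(1+t^{-\lambda}\bigr)\, e^{-ct}$. -/

import Mathlib

open MeasureTheory

/-- `φ_j(ξ) = √2 sin(jπξ)`. -/
noncomputable def phiF (j : ℕ) (ξ : ℝ) : ℝ := Real.sqrt 2 * Real.sin ((j : ℝ) * Real.pi * ξ)

/-- Green function of the heat operator on `[0,1]` with homogeneous
Dirichlet boundary conditions: `G(t,x,y) = ∑_{j≥1} e^{-j²π²t} φ_j(x) φ_j(y)`. -/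
noncomputable def G (t x y : ℝ) : ℝ :=
  ∑' j : ℕ, Real.exp (-((j : ℝ) + 1) ^ 2 * Real.pi ^ 2 * t) * phiF (j + 1) x * phiF (j + 1) y

/-- The cube `Q = [0,1]^d`. -/
def Q (d : ℕ) : Set (EuclideanSpace ℝ (Fin d)) := {x | ∀ i, x i ∈ Set.Icc (0 : ℝ) 1}

/-- `G_d(t,x,y) = ∏_i G(t,x_i,y_i)` on `Q = [0,1]^d`. -/
noncomputable def Gd (d : ℕ) (t : ℝ) (x y : EuclideanSpace ℝ (Fin d)) : ℝ :=
  ∏ i, G t (x i) (y i)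

/-- `‖φ‖_{(α)}² = ∫_Q ∫_Q |φ(y)| |y-z|^{-α} |φ(z)| dy dz`. -/
noncomputable def normAlphaSq (d : ℕ) (α : ℝ) (f : EuclideanSpace ℝ (Fin d) → ℝ) : ℝ :=
  ∫ y in Q d, ∫ z in Q d, |f y| * ‖y - z‖ ^ (-α) * |f z|

/-- `κ_n(y) = ⌊ny⌋/n`. -/
noncomputable def kappa (n : ℕ) (y : ℝ) : ℝ := (⌊(n : ℝ) * y⌋ : ℝ) / n

/-- `λ_j^n = -4n² sin²(jπ/(2n))`. -/
noncomputable def lamn (n j : ℕ) : ℝ :=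
  -4 * (n : ℝ) ^ 2 * Real.sin ((j : ℝ) * Real.pi / (2 * n)) ^ 2

/-- Piecewise-linear interpolation of `φ_j` on the grid `{i/n : 0 ≤ i ≤ n}`. -/
noncomputable def phiLin (n j : ℕ) (x : ℝ) : ℝ :=
  phiF j ((⌊(n : ℝ) * x⌋ : ℝ) / n) +
    ((n : ℝ) * x - (⌊(n : ℝ) * x⌋ : ℝ)) *
      (phiF j (((⌊(n : ℝ) * x⌋ : ℝ) + 1) / n) - phiF j ((⌊(n : ℝ) * x⌋ : ℝ) / n))

/-- Space-discretized Green function on `[0,1]`: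
`G^n(t,x,y) = ∑_{j=1}^{n-1} e^{λ_j^n t} φ_j^n(x) φ_j(κ_n(y))`. -/
noncomputable def Gn (n : ℕ) (t x y : ℝ) : ℝ :=
  ∑ j ∈ Finset.Icc 1 (n - 1), Real.exp (lamn n j * t) * phiLin n j x * phiF j (kappa n y)

/-- `(G_d)^n(t,x,y) = ∏_i G^n(t,x_i,y_i)`. -/
noncomputable def Gdn (d n : ℕ) (t : ℝ) (x y : EuclideanSpace ℝ (Fin d)) : ℝ :=
  ∏ i, Gn n t (x i) (y i)

/-!
The integral over the cube factorises, so it suffices to bound `∫₀¹ |Gⁿ(t,x,y)| dy` by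
`K e^{-2t}` uniformly in `n` and `x`. For `t ≥ 1` this follows from `|Gⁿ| ≤ 2 ∑ⱼ e^{λⱼⁿ t}` and
Jordan's inequality `λⱼⁿ ≤ -4j²`.

The small-time bound must not blow up as `t → 0`. Put `z = n²t`. Discrete Fourier inversion of
`θ ↦ e^{2z cos θ}` over the `2n`-th roots of unity, together with the method of images, gives
`Gⁿ(t, i/n, k/n) = n e^{-2z} (q(i-k) - q(i+k))`, where `q = wrappedSkellam (2n) z` and
`e^{-2z} q(m)` is the probability that the difference of two independent Poisson(`z`) variables
is `≡ m (mod 2n)`. Hence `∑ₖ |Gⁿ(t, i/n, k/n)| ≤ 2n`. Since `Gⁿ(t,x,·)` is constant on the cells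
`[k/n, (k+1)/n)` and affine in `x` between grid rows, `∫₀¹ |Gⁿ(t,x,y)| dy ≤ 2`.
-/

open Finset Real

open Set in
theorem setIntegral_Q_prod (d : ℕ) (f : Fin d → ℝ → ℝ) :
    ∫ y in Q d, ∏ i, f i (y i) = ∏ i, ∫ s in Icc (0 : ℝ) 1, f i s := by
  have hQ : Q d = WithLp.ofLp ⁻¹' univ.pi fun _ : Fin d => Icc (0 : ℝ) 1 := by
    ext y; simp only [Q, mem_ofPred_eq, Set.mem_preimage, Set.mem_univ_pi]
  rw [hQ, (PiLp.volume_preserving_ofLp (Fin d)).setIntegral_preimage_emb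
    (MeasurableEquiv.toLp 2 (Fin d → ℝ)).symm.measurableEmbedding (fun y => ∏ i, f i (y i)),
    volume_pi, Measure.restrict_pi_pi, integral_fintype_prod_eq_prod]

open Set in
lemma setIntegral_Icc_eq_of_floor_eq {n : ℕ} (hn : n ≠ 0) {f : ℝ → ℝ} {c : ℕ → ℝ}
    (hf : ∀ (k : ℕ) (y : ℝ), ⌊(n : ℝ) * y⌋ = k → f y = c k) :
    ∫ y in Icc (0 : ℝ) 1, f y = (∑ k ∈ range n, c k) / n := by
  have hn' : (0 : ℝ) < n := by positivity
  have hle (k : ℕ) : (k : ℝ) / n ≤ ((k + 1 : ℕ) : ℝ) / n := by gcongr; simp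
  have hcell (k : ℕ) :
      EqOn f (fun _ => c k) (Ioo ((k : ℝ) / n) (((k + 1 : ℕ) : ℝ) / n)) := by
    intro y ⟨hy₁, hy₂⟩
    rw [div_lt_iff₀ hn'] at hy₁
    rw [lt_div_iff₀ hn'] at hy₂
    refine hf k y (Int.floor_eq_iff.mpr ⟨?_, ?_⟩) <;> push_cast at hy₂ ⊢ <;> linarith
  have hint (k : ℕ) : IntervalIntegrable f volume ((k : ℝ) / n) (((k + 1 : ℕ) : ℝ) / n) :=
    (intervalIntegrable_iff_integrableOn_Ioo_of_le (hle k)).mpr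
      ((integrableOn_const measure_Ioo_lt_top.ne).congr_fun (hcell k).symm measurableSet_Ioo)
  have hcellInt (k : ℕ) : ∫ y in (k : ℝ) / n..((k + 1 : ℕ) : ℝ) / n, f y = c k / n := by
    rw [intervalIntegral.integral_of_le (hle k), integral_Ioc_eq_integral_Ioo,
      setIntegral_congr_fun measurableSet_Ioo (hcell k), setIntegral_const,
      Real.volume_real_Ioo_of_le (hle k), smul_eq_mul]
    push_cast
    ring
  have hsum := intervalIntegral.sum_integral_adjacent_intervals (a := fun k : ℕ => (k : ℝ) / n)
    (n := n) fun k _ => hint k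
  simp only [hcellInt, CharP.cast_eq_zero, zero_div, div_self hn'.ne'] at hsum
  rw [integral_Icc_eq_integral_Ioc, ← intervalIntegral.integral_of_le zero_le_one, ← hsum,
    sum_div]

lemma sum_range_two_mul_eq_two_nsmul_sum_Ioo {M : Type*} [AddCommMonoid M] (n : ℕ) (F : ℕ → M)
    (h0 : F 0 = 0) (hn : F n = 0) (hF : ∀ j < n, F (2 * n - j) = F j) :
    ∑ j ∈ range (2 * n), F j = 2 • ∑ j ∈ Ioo 0 n, F j := by
  have hsub : Ioo 0 n ∪ Ioo n (2 * n) ⊆ range (2 * n) := by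
    intro j; simp only [mem_union, mem_Ioo, mem_range]; omega
  have hzero : ∀ j ∈ range (2 * n), j ∉ Ioo 0 n ∪ Ioo n (2 * n) → F j = 0 := by
    intro j hj hj'
    simp only [mem_union, mem_Ioo, mem_range] at hj hj'
    obtain rfl | rfl : j = 0 ∨ j = n := by omega
    exacts [h0, hn]
  have hdisj : Disjoint (Ioo 0 n) (Ioo n (2 * n)) :=
    disjoint_left.mpr fun j h1 h2 => by simp only [mem_Ioo] at h1 h2; omega
  have hrefl : ∑ j ∈ Ioo n (2 * n), F j = ∑ j ∈ Ioo 0 n, F j := by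
    refine sum_nbij' (2 * n - ·) (2 * n - ·) ?_ ?_ ?_ ?_ fun j hj => ?_
    all_goals try (intro j hj; simp only [mem_Ioo] at hj ⊢; omega)
    rw [mem_Ioo] at hj
    rw [← hF (2 * n - j) (by omega), Nat.sub_sub_self (by omega)]
  rw [← sum_subset hsub hzero, sum_union hdisj, hrefl, two_nsmul]

lemma cos_int_mul_two_pi_sub_div (m : ℤ) {N j : ℕ} (hN : N ≠ 0) (hj : j ≤ N) :
    cos (m * (2 * π * (N - j : ℕ) / N)) = cos (m * (2 * π * j / N)) := by
  rw [← Real.cos_int_mul_two_pi_sub (m * (2 * π * j / N)) m]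
  congr 1
  push_cast [Nat.cast_sub hj]
  field_simp

theorem IsPrimitiveRoot.sum_range_pow_zpow {K : Type*} [Field K] {ζ : K} {N : ℕ}
    (hζ : IsPrimitiveRoot ζ N) (r : ℤ) :
    ∑ j ∈ range N, (ζ ^ j) ^ r = if (N : ℤ) ∣ r then (N : K) else 0 := by
  have hcomm (j : ℕ) : (ζ ^ j) ^ r = (ζ ^ r) ^ j := by
    rw [← zpow_natCast, ← zpow_mul, ← zpow_natCast, ← zpow_mul, mul_comm]
  simp_rw [hcomm]
  split_ifs with h
  · simp [(hζ.zpow_eq_one_iff_dvd r).mpr h]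
  · have hne : ζ ^ r ≠ 1 := fun h1 => h ((hζ.zpow_eq_one_iff_dvd r).mp h1)
    rw [geom_sum_eq hne, ← hcomm, hζ.pow_eq_one, one_zpow, sub_self, zero_div]

noncomputable def poissonPairWeight (z : ℝ) (p : ℕ × ℕ) : ℝ :=
  z ^ p.1 / p.1.factorial * (z ^ p.2 / p.2.factorial)

noncomputable def wrappedSkellam (N : ℕ) (z : ℝ) (m : ℤ) : ℝ :=
  ∑' p, {p : ℕ × ℕ | (N : ℤ) ∣ p.1 - p.2 - m}.indicator (poissonPairWeight z) p

lemma poissonPairWeight_nonneg {z : ℝ} (hz : 0 ≤ z) (p : ℕ × ℕ) :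
    0 ≤ poissonPairWeight z p := by
  unfold poissonPairWeight; positivity

lemma hasSum_poissonPairWeight (z : ℝ) : HasSum (poissonPairWeight z) (exp (2 * z)) := by
  have h : HasSum (fun n : ℕ => z ^ n / (n.factorial : ℝ)) (Real.exp z) := by
    rw [Real.exp_eq_exp_ℝ]
    exact NormedSpace.expSeries_div_hasSum_exp z
  have hnorm : Summable fun a : ℕ => ‖z ^ a / (a.factorial : ℝ)‖ := by
    simp only [norm_div, norm_pow, Real.norm_eq_abs, Nat.abs_cast]
    exact Real.summable_pow_div_factorial |z|
  rw [two_mul, Real.exp_add]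
  exact (h.mul h (summable_mul_of_summable_norm hnorm hnorm)).congr_fun fun p => rfl

lemma wrappedSkellam_nonneg {z : ℝ} (hz : 0 ≤ z) (N : ℕ) (m : ℤ) :
    0 ≤ wrappedSkellam N z m :=
  tsum_nonneg fun _ => Set.indicator_nonneg (fun p _ => poissonPairWeight_nonneg hz p) _

lemma sum_wrappedSkellam_le {z : ℝ} (hz : 0 ≤ z) {N : ℕ} {ι : Type*} (s : Finset ι)
    (g : ι → ℤ)
    (hg : ∀ a ∈ s, ∀ b ∈ s, (N : ℤ) ∣ g a - g b → a = b) :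
    ∑ a ∈ s, wrappedSkellam N z (g a) ≤ exp (2 * z) := by
  classical
  have hw := hasSum_poissonPairWeight z
  set A : ι → Set (ℕ × ℕ) := fun a => {p | (N : ℤ) ∣ p.1 - p.2 - g a}
  have hdisj : (s : Set ι).PairwiseDisjoint A := by
    refine fun a ha b hb hab => Set.disjoint_left.mpr fun p hpa hpb => hab (hg a ha b hb ?_)
    simpa using dvd_sub hpb hpa
  calc ∑ a ∈ s, wrappedSkellam N z (g a)
      = ∑' p, (⋃ a ∈ s, A a).indicator (poissonPairWeight z) p := by
        simp only [wrappedSkellam, Finset.indicator_biUnion_apply s A hdisj]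
        exact (Summable.tsum_finsetSum fun a _ => hw.summable.indicator _).symm
    _ ≤ ∑' p, poissonPairWeight z p :=
        (hw.summable.indicator _).tsum_le_tsum
          (Set.indicator_le_self' fun p _ => poissonPairWeight_nonneg hz p) hw.summable
    _ = exp (2 * z) := hw.tsum_eq

lemma hasSum_cexp_mul_zpow (z : ℝ) {u : ℂ} (hu : u ≠ 0) (m : ℤ) :
    HasSum (fun p : ℕ × ℕ => (poissonPairWeight z p : ℂ) * u ^ ((p.1 : ℤ) - p.2 - m))
      (Complex.exp (z * (u + u⁻¹)) * u ^ (-m)) := by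
  have hexp (v : ℂ) : HasSum (fun a : ℕ => v ^ a / (a.factorial : ℂ)) (Complex.exp v) := by
    rw [Complex.exp_eq_exp_ℂ]
    exact NormedSpace.expSeries_div_hasSum_exp v
  have hnorm (v : ℂ) : Summable fun a : ℕ => ‖v ^ a / (a.factorial : ℂ)‖ := by
    simp only [norm_div, norm_pow, Complex.norm_natCast]
    exact Real.summable_pow_div_factorial ‖v‖
  have hsummable := summable_mul_of_summable_norm (hnorm (z * u)) (hnorm (z * u⁻¹))
  have hprod := ((hexp (z * u)).mul (hexp (z * u⁻¹)) hsummable).mul_right (u ^ (-m))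
  rw [mul_add, Complex.exp_add]
  refine hprod.congr_fun fun p => ?_
  simp only [poissonPairWeight, zpow_sub₀ hu, zpow_natCast, zpow_neg, mul_pow, inv_pow]
  push_cast
  ring

lemma sum_range_cexp_mul_zpow {ζ : ℂ} {N : ℕ} (hζ : IsPrimitiveRoot ζ N) (z : ℝ)
    (m : ℤ) :
    ∑ j ∈ range N, Complex.exp (z * (ζ ^ j + (ζ ^ j)⁻¹)) * (ζ ^ j) ^ (-m)
      = N * wrappedSkellam N z m := by
  obtain rfl | hN := eq_or_ne N 0
  · simp
  have hsum := hasSum_sum fun j (_ : j ∈ range N) =>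
    hasSum_cexp_mul_zpow z (pow_ne_zero j (hζ.ne_zero hN)) m
  refine hsum.unique ?_
  simp_rw [← mul_sum, hζ.sum_range_pow_zpow]
  have hq := (Complex.hasSum_ofReal.mpr ((hasSum_poissonPairWeight z).summable.indicator
    {p : ℕ × ℕ | (N : ℤ) ∣ p.1 - p.2 - m}).hasSum).mul_left (N : ℂ)
  refine hq.congr_fun fun p => ?_
  by_cases hp : (N : ℤ) ∣ p.1 - p.2 - m <;> simp [Set.indicator, hp, mul_comm]

lemma sum_range_exp_mul_cos (N : ℕ) (z : ℝ) (m : ℤ) :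
    ∑ j ∈ range N, exp (2 * z * cos (2 * π * j / N)) * cos (m * (2 * π * j / N))
      = N * wrappedSkellam N z m := by
  obtain rfl | hN := eq_or_ne N 0
  · simp
  have h := congrArg Complex.re (sum_range_cexp_mul_zpow (Complex.isPrimitiveRoot_exp N hN) z m)
  rw [Complex.re_sum] at h
  convert h using 2 with j hj
  · set θ : ℝ := 2 * π * j / N
    have hζj : Complex.exp (2 * π * Complex.I / N) ^ j = Complex.exp (θ * Complex.I) := by
      rw [← Complex.exp_nat_mul]; congr 1; push_cast [θ]; ring
    have hcos : (z : ℂ) * (Complex.exp (θ * Complex.I) + (Complex.exp (θ * Complex.I))⁻¹)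
        = ((2 * z * Real.cos θ : ℝ) : ℂ) := by
      rw [← Complex.exp_neg]; push_cast; rw [Complex.cos]; ring_nf
    have hzpow :
        Complex.exp (θ * Complex.I) ^ (-m) = Complex.exp ((-(m * θ) : ℝ) * Complex.I) := by
      rw [← Complex.exp_int_mul]; congr 1; push_cast; ring
    rw [hζj, hcos, hzpow, ← Complex.ofReal_exp, Complex.re_ofReal_mul,
      Complex.exp_ofReal_mul_I_re, Real.cos_neg]
  · simp

noncomputable def gridKernel (n : ℕ) (t : ℝ) (i k : ℤ) : ℝ :=
  ∑ j ∈ Icc 1 (n - 1), exp (lamn n j * t) * (phiF j (i / n) * phiF j (k / n))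

lemma lamn_mul_eq_cos (n j : ℕ) (t : ℝ) :
    lamn n j * t = 2 * (n ^ 2 * t) * cos (2 * π * j / (2 * n : ℕ)) - 2 * (n ^ 2 * t) := by
  have h : 2 * π * j / (2 * n : ℕ) = 2 * (j * π / (2 * n)) := by push_cast; ring
  rw [lamn, h, Real.cos_two_mul, Real.cos_sq']
  ring

lemma phiF_mul_phiF (n j : ℕ) (hn : n ≠ 0) (i k : ℤ) :
    phiF j (i / n) * phiF j (k / n) = cos ((i - k : ℤ) * (2 * π * j / (2 * n : ℕ)))
      - cos ((i + k : ℤ) * (2 * π * j / (2 * n : ℕ))) := by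
  have h2 : √2 * √2 = 2 := Real.mul_self_sqrt zero_le_two
  rw [phiF, phiF, mul_mul_mul_comm, h2, ← mul_assoc, Real.two_mul_sin_mul_sin]
  congr 2 <;> push_cast <;> field_simp

lemma gridKernel_eq (n : ℕ) (hn : n ≠ 0) (t : ℝ) (i k : ℤ) :
    gridKernel n t i k = n * exp (-(2 * (n ^ 2 * t))) *
      (wrappedSkellam (2 * n) (n ^ 2 * t) (i - k)
        - wrappedSkellam (2 * n) (n ^ 2 * t) (i + k)) := by
  set z : ℝ := n ^ 2 * t
  set θ : ℕ → ℝ := fun j => 2 * π * j / (2 * n : ℕ)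
  set F : ℕ → ℝ := fun j => exp (2 * z * cos (θ j)) *
    (cos ((i - k : ℤ) * θ j) - cos ((i + k : ℤ) * θ j))
  have hterm (j : ℕ) :
      exp (lamn n j * t) * (phiF j (i / n) * phiF j (k / n)) = exp (-(2 * z)) * F j := by
    rw [lamn_mul_eq_cos, phiF_mul_phiF n j hn, sub_eq_neg_add, Real.exp_add, mul_assoc]
  have hF0 : F 0 = 0 := by simp [F, θ]
  have hFn : F n = 0 := by
    have h : ((i + k : ℤ) : ℝ) * θ n = (i - k : ℤ) * θ n + (k : ℤ) * (2 * π) := by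
      simp only [θ]; push_cast; field_simp; ring
    simp only [F, h, Real.cos_add_int_mul_two_pi, sub_self, mul_zero]
  have hFsymm : ∀ j < n, F (2 * n - j) = F j := by
    intro j hj
    have hj' : j ≤ 2 * n := by omega
    have h1 := cos_int_mul_two_pi_sub_div 1 (N := 2 * n) (by omega) hj'
    simp only [Int.cast_one, one_mul] at h1
    simp only [F, θ, h1, cos_int_mul_two_pi_sub_div _ (N := 2 * n) (by omega) hj']
  have hIcc : Icc 1 (n - 1) = Ioo 0 n := by ext j; simp only [mem_Icc, mem_Ioo]; omega
  have hfold := sum_range_two_mul_eq_two_nsmul_sum_Ioo n F hF0 hFn hFsymm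
  have hrange : ∑ j ∈ range (2 * n), F j
      = (2 * n : ℕ) * wrappedSkellam (2 * n) z (i - k)
        - (2 * n : ℕ) * wrappedSkellam (2 * n) z (i + k) := by
    simp only [F, θ, mul_sub, sum_sub_distrib, sum_range_exp_mul_cos]
  rw [hrange, nsmul_eq_mul] at hfold
  push_cast at hfold
  rw [gridKernel, sum_congr rfl fun j _ => hterm j, ← mul_sum, hIcc]
  linear_combination (-(exp (-(2 * z)) / 2)) * hfold

lemma sum_abs_gridKernel_le (n : ℕ) (hn : n ≠ 0) {t : ℝ} (ht : 0 ≤ t) (i : ℤ) :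
    ∑ k ∈ range n, |gridKernel n t i k| ≤ 2 * n := by
  set z : ℝ := n ^ 2 * t
  have hz : 0 ≤ z := by positivity
  have hinj (a b : ℕ) (ha : a ∈ range n) (hb : b ∈ range n)
      (h : ((2 * n : ℕ) : ℤ) ∣ (a : ℤ) - b) : a = b := by
    rw [mem_range] at ha hb
    have := Int.eq_zero_of_abs_lt_dvd h (by rw [abs_lt]; push_cast; omega)
    omega
  have hsub : ∑ k ∈ range n, wrappedSkellam (2 * n) z (i - k) ≤ exp (2 * z) :=
    sum_wrappedSkellam_le hz _ _ fun a ha b hb h =>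
      (hinj b a hb ha (by rwa [sub_sub_sub_cancel_left] at h)).symm
  have hadd : ∑ k ∈ range n, wrappedSkellam (2 * n) z (i + k) ≤ exp (2 * z) :=
    sum_wrappedSkellam_le hz _ _ fun a ha b hb h =>
      hinj a b ha hb (by rwa [add_sub_add_left_eq_sub] at h)
  have habs (k : ℕ) : |gridKernel n t i k| ≤ n * exp (-(2 * z)) *
      (wrappedSkellam (2 * n) z (i - k) + wrappedSkellam (2 * n) z (i + k)) := by
    rw [gridKernel_eq n hn, abs_mul, abs_of_nonneg (by positivity)]
    gcongr
    refine (abs_sub _ _).trans_eq ?_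
    rw [abs_of_nonneg (wrappedSkellam_nonneg hz _ _), abs_of_nonneg (wrappedSkellam_nonneg hz _ _)]
  calc ∑ k ∈ range n, |gridKernel n t i k|
      ≤ n * exp (-(2 * z)) * (∑ k ∈ range n, wrappedSkellam (2 * n) z (i - k)
          + ∑ k ∈ range n, wrappedSkellam (2 * n) z (i + k)) := by
        rw [← sum_add_distrib, mul_sum]
        exact sum_le_sum fun k _ => habs k
    _ ≤ n * exp (-(2 * z)) * (exp (2 * z) + exp (2 * z)) := by gcongr
    _ = 2 * n := by
        rw [Real.exp_neg]
        field_simp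
        ring

lemma Gn_eq_of_floor_eq (n : ℕ) (t x y : ℝ) {k : ℤ} (hk : ⌊(n : ℝ) * y⌋ = k) :
    Gn n t x y = (1 - Int.fract ((n : ℝ) * x)) * gridKernel n t ⌊(n : ℝ) * x⌋ k
      + Int.fract ((n : ℝ) * x) * gridKernel n t (⌊(n : ℝ) * x⌋ + 1) k := by
  rw [Gn, gridKernel, gridKernel, mul_sum, mul_sum, ← sum_add_distrib]
  refine sum_congr rfl fun j _ => ?_
  rw [phiLin, kappa, hk, Int.fract]
  push_cast
  ring

lemma setIntegral_abs_Gn_le_two (n : ℕ) (hn : n ≠ 0) {t : ℝ} (ht : 0 ≤ t) (x : ℝ) :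
    ∫ y in Set.Icc (0 : ℝ) 1, |Gn n t x y| ≤ 2 := by
  set i := ⌊(n : ℝ) * x⌋
  set θ := Int.fract ((n : ℝ) * x)
  have hθ₀ : 0 ≤ θ := Int.fract_nonneg _
  have hθ₁ : 0 ≤ 1 - θ := sub_nonneg.mpr (Int.fract_lt_one _).le
  rw [setIntegral_Icc_eq_of_floor_eq hn
      (c := fun k => |(1 - θ) * gridKernel n t i k + θ * gridKernel n t (i + 1) k|)
      fun k y hk => by rw [Gn_eq_of_floor_eq n t x y hk],
    div_le_iff₀ (by positivity)]
  calc ∑ k ∈ range n, |(1 - θ) * gridKernel n t i k + θ * gridKernel n t (i + 1) k|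
      ≤ ∑ k ∈ range n,
          ((1 - θ) * |gridKernel n t i k| + θ * |gridKernel n t (i + 1) k|) := by
        refine sum_le_sum fun k _ => (abs_add_le _ _).trans_eq ?_
        rw [abs_mul, abs_mul, abs_of_nonneg hθ₀, abs_of_nonneg hθ₁]
    _ = (1 - θ) * ∑ k ∈ range n, |gridKernel n t i k|
          + θ * ∑ k ∈ range n, |gridKernel n t (i + 1) k| := by
        rw [sum_add_distrib, mul_sum, mul_sum]
    _ ≤ (1 - θ) * (2 * n) + θ * (2 * n) := by
        gcongr <;> exact sum_abs_gridKernel_le n hn ht _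
    _ = 2 * n := by ring

lemma lamn_le_neg_four_mul_sq {n j : ℕ} (hj : j ≤ n) : lamn n j ≤ -4 * (j : ℝ) ^ 2 := by
  obtain rfl | hn := eq_or_ne n 0
  · obtain rfl : j = 0 := by omega
    simp [lamn]
  have hn' : (0 : ℝ) < n := by positivity
  have hjn : (j : ℝ) ≤ n := by exact_mod_cast hj
  have hsin : (j : ℝ) / n ≤ sin (j * π / (2 * n)) := by
    have hjordan := Real.mul_le_sin (x := j * π / (2 * n)) (by positivity)
      (by rw [div_le_div_iff₀ (by positivity) two_pos]; nlinarith [Real.pi_pos])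
    calc (j : ℝ) / n = 2 / π * (j * π / (2 * n)) := by field_simp
      _ ≤ _ := hjordan
  have hsq := pow_le_pow_left₀ (by positivity) hsin 2
  rw [div_pow, div_le_iff₀ (by positivity)] at hsq
  rw [lamn]
  linarith

lemma sum_exp_lamn_mul_le {n : ℕ} {t : ℝ} (ht : 1 ≤ t) :
    ∑ j ∈ Icc 1 (n - 1), exp (lamn n j * t) ≤ 2 * exp (-2 * t) := by
  have hhalf : exp (-2) ≤ 1 / 2 := by
    rw [Real.exp_neg, one_div, inv_le_inv₀ (Real.exp_pos 2) two_pos]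
    linarith [Real.add_one_le_exp 2]
  have hterm (j : ℕ) (hj : j ∈ Icc 1 (n - 1)) :
      exp (lamn n j * t) ≤ exp (-2 * t) * (1 / 2) ^ j := by
    rw [mem_Icc] at hj
    have hj₁ : (1 : ℝ) ≤ j := by exact_mod_cast hj.1
    have hlam : lamn n j * t ≤ -2 * t + j * (-2) := by
      have := mul_le_mul_of_nonneg_right (lamn_le_neg_four_mul_sq (n := n) (j := j) (by omega))
        (by linarith : (0 : ℝ) ≤ t)
      nlinarith [mul_nonneg (sub_nonneg.mpr ht) (by nlinarith : (0 : ℝ) ≤ 2 * j ^ 2 - 1),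
        mul_nonneg (sub_nonneg.mpr hj₁) (by linarith : (0 : ℝ) ≤ 2 * j + 1)]
    calc exp (lamn n j * t) ≤ exp (-2 * t) * exp (-2) ^ j := by
          rw [← Real.exp_nat_mul, ← Real.exp_add]
          exact Real.exp_le_exp.mpr hlam
      _ ≤ exp (-2 * t) * (1 / 2) ^ j := by gcongr
  calc ∑ j ∈ Icc 1 (n - 1), exp (lamn n j * t)
      ≤ exp (-2 * t) * ∑ j ∈ Icc 1 (n - 1), (1 / 2 : ℝ) ^ j := by
        rw [mul_sum]
        exact sum_le_sum hterm
    _ ≤ exp (-2 * t) * 2 := by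
        gcongr
        exact (summable_geometric_two.sum_le_tsum _ fun j _ => by positivity).trans_eq
          tsum_geometric_two
    _ = 2 * exp (-2 * t) := mul_comm _ _

lemma abs_phiF_le (j : ℕ) (ξ : ℝ) : |phiF j ξ| ≤ √2 := by
  rw [phiF, abs_mul, abs_of_nonneg (Real.sqrt_nonneg 2)]
  exact mul_le_of_le_one_right (Real.sqrt_nonneg 2) (Real.abs_sin_le_one _)

lemma abs_phiLin_le (n j : ℕ) (x : ℝ) : |phiLin n j x| ≤ √2 := by
  have hθ₀ : 0 ≤ (n : ℝ) * x - ⌊(n : ℝ) * x⌋ := sub_nonneg.mpr (Int.floor_le _)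
  have hθ₁ : 0 ≤ 1 - ((n : ℝ) * x - ⌊(n : ℝ) * x⌋) := by
    linarith [Int.lt_floor_add_one ((n : ℝ) * x)]
  have ha := abs_le.mp (abs_phiF_le j ((⌊(n : ℝ) * x⌋ : ℝ) / n))
  have hb := abs_le.mp (abs_phiF_le j ((⌊(n : ℝ) * x⌋ + 1 : ℝ) / n))
  rw [phiLin, abs_le]
  constructor
  · nlinarith [mul_nonneg hθ₀ (neg_le_iff_add_nonneg.mp hb.1),
      mul_nonneg hθ₁ (neg_le_iff_add_nonneg.mp ha.1)]
  · nlinarith [mul_nonneg hθ₀ (sub_nonneg.mpr hb.2), mul_nonneg hθ₁ (sub_nonneg.mpr ha.2)]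

lemma abs_Gn_le (n : ℕ) (t x y : ℝ) :
    |Gn n t x y| ≤ 2 * ∑ j ∈ Icc 1 (n - 1), exp (lamn n j * t) := by
  rw [Gn, mul_sum]
  refine (abs_sum_le_sum_abs _ _).trans (sum_le_sum fun j _ => ?_)
  rw [abs_mul, abs_mul, Real.abs_exp, mul_assoc, mul_comm 2]
  gcongr
  calc |phiLin n j x| * |phiF j (kappa n y)| ≤ √2 * √2 :=
        mul_le_mul (abs_phiLin_le n j x) (abs_phiF_le j _) (abs_nonneg _) (Real.sqrt_nonneg 2)
    _ = 2 := Real.mul_self_sqrt zero_le_two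

lemma setIntegral_abs_Gn_le_of_one_le (n : ℕ) {t : ℝ} (ht : 1 ≤ t) (x : ℝ) :
    ∫ y in Set.Icc (0 : ℝ) 1, |Gn n t x y| ≤ 4 * exp (-2 * t) := by
  have h := norm_setIntegral_le_of_norm_le_const (μ := volume) measure_Icc_lt_top
    fun y (_ : y ∈ Set.Icc (0 : ℝ) 1) => (Real.norm_of_nonneg (abs_nonneg _)).trans_le
      ((abs_Gn_le n t x y).trans (mul_le_mul_of_nonneg_left (sum_exp_lamn_mul_le ht) two_pos.le))
  rw [Real.volume_real_Icc_of_le zero_le_one, sub_zero, mul_one] at h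
  linarith [(Real.le_norm_self _).trans h]

lemma setIntegral_abs_Gn_le (n : ℕ) (hn : n ≠ 0) {t : ℝ} (ht : 0 ≤ t) (x : ℝ) :
    ∫ y in Set.Icc (0 : ℝ) 1, |Gn n t x y| ≤ 2 * exp 2 * exp (-2 * t) := by
  have he2 : 3 ≤ exp 2 := by linarith [Real.add_one_le_exp 2]
  rcases le_total t 1 with ht₁ | ht₁
  · calc ∫ y in Set.Icc (0 : ℝ) 1, |Gn n t x y| ≤ 2 := setIntegral_abs_Gn_le_two n hn ht x
      _ ≤ 2 * exp (2 + -2 * t) := by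
          linarith [Real.one_le_exp (by linarith : (0 : ℝ) ≤ 2 + -2 * t)]
      _ = 2 * exp 2 * exp (-2 * t) := by rw [Real.exp_add, mul_assoc]
  · calc ∫ y in Set.Icc (0 : ℝ) 1, |Gn n t x y| ≤ 4 * exp (-2 * t) :=
          setIntegral_abs_Gn_le_of_one_le n ht₁ x
      _ ≤ 2 * exp 2 * exp (-2 * t) := by gcongr; linarith

theorem stmt_8_general (d : ℕ) (hd : 1 ≤ d) (lam : ℝ) :
    ∃ c C : ℝ, 0 < c ∧ 0 < C ∧ ∀ n : ℕ, 2 ≤ n → ∀ t : ℝ, 0 < t → ∀ x ∈ Q d,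
      (∫ y in Q d, |Gdn d n t x y|) ≤ C * (1 + t ^ (-lam)) * Real.exp (-c * t) := by
  refine ⟨2, (2 * exp 2) ^ d, two_pos, by positivity, fun n hn t ht x _ => ?_⟩
  have hdecay : exp (-2 * t) ^ d ≤ exp (-2 * t) :=
    pow_le_of_le_one (Real.exp_pos _).le (Real.exp_le_one_iff.mpr (by linarith)) (by omega)
  have hweight : 1 ≤ 1 + t ^ (-lam) := le_add_of_nonneg_right (Real.rpow_nonneg ht.le _)
  calc ∫ y in Q d, |Gdn d n t x y| = ∏ i, ∫ s in Set.Icc (0 : ℝ) 1, |Gn n t (x i) s| := by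
        simp only [Gdn, abs_prod]
        exact setIntegral_Q_prod d fun i s => |Gn n t (x i) s|
    _ ≤ ∏ _i : Fin d, 2 * exp 2 * exp (-2 * t) :=
        prod_le_prod (fun i _ => integral_nonneg fun _ => abs_nonneg _)
          fun i _ => setIntegral_abs_Gn_le n (by omega) ht.le (x i)
    _ = (2 * exp 2) ^ d * exp (-2 * t) ^ d := by
        rw [prod_const, card_univ, Fintype.card_fin, mul_pow]
    _ ≤ (2 * exp 2) ^ d * (1 + t ^ (-lam)) * exp (-2 * t) := by
        rw [mul_assoc]
        gcongr
        exact hdecay.trans (le_mul_of_one_le_left (Real.exp_pos _).le hweight)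

/-- `L¹` bound for the space-discretized Green function. -/
theorem stmt_8 (d : ℕ) (hd : 1 ≤ d) (lam : ℝ) (hlam : 0 < lam) :
    ∃ c C : ℝ, 0 < c ∧ 0 < C ∧ ∀ n : ℕ, 2 ≤ n → ∀ t : ℝ, 0 < t → ∀ x ∈ Q d,
      (∫ y in Q d, |Gdn d n t x y|) ≤ C * (1 + t ^ (-lam)) * Real.exp (-c * t) :=
  stmt_8_general d hd lam
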